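/- arXiv:2311.10616 — 6 statements merged into one kernel-verified Lean document; each statement's English description precedes it below -/
import Mathlib

section
/- Let G be a graph on n vertices with arboricity at most α. Define Z_1 = V(G) and Z_{i+1} = {v ∈ Z_i : deg_{Z_i}(v) > 4α}. Then Z_{⌈log₂ n⌉ + 1} is empty, i.e., the H-partition with threshold 4α has at most ⌈log₂ n⌉ + 1 levels. -/
open scoped Classical

/-!
Summing degrees inside a level `Z` counts each edge within `Z` twice, so by the arboricity bound
the vertices of degree `> 4α` in `Z` number at most `2α(|Z| - 1) / (4α + 1) < |Z| / 2`. Hence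
every nonempty level has less than half the size of the previous one, and starting from `n`
vertices the level with index `⌈log₂ n⌉ + 1` must be empty.
-/

open Finset

namespace SimpleGraph

variable {V : Type*} (G : SimpleGraph V)

lemma card_edgeFinset_induce_eq_card_filter [Fintype V] (Z : Finset V) :
    #(G.induce (Z : Set V)).edgeFinset = #(G.edgeFinset.filter fun e => ∀ x ∈ e, x ∈ Z) := by
  have h := congrArg card (G.map_edgeFinset_induce (s := (Z : Set V)))
  rw [card_map] at h
  convert h using 2 <;> ext <;> simp

lemma degree_induce_eq_card_filter_adj (Z : Finset V) (v : (Z : Set V)) :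
    (G.induce (Z : Set V)).degree v = #(Z.filter fun u => G.Adj v u) := by
  rw [← card_neighborFinset_eq_degree]
  exact card_bij (fun u _ => u.1) (by simp) (by simp) (by aesop)

lemma sum_card_filter_adj_eq_two_mul_card_edges [Fintype V] (Z : Finset V) :
    ∑ v ∈ Z, #(Z.filter fun u => G.Adj v u)
      = 2 * #(G.edgeFinset.filter fun e => ∀ x ∈ e, x ∈ Z) := by
  rw [← card_edgeFinset_induce_eq_card_filter, ← sum_degrees_eq_twice_card_edges,
    ← sum_coe_sort Z]
  exact sum_congr rfl fun v _ => (G.degree_induce_eq_card_filter_adj Z v).symm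

/-- Iterated from `univ` with `d = 4α`, this gives the levels `Z_1 ⊇ Z_2 ⊇ …` of the
H-partition. -/
noncomputable def highDegreeVertices (d : ℕ) (Z : Finset V) : Finset V :=
  Z.filter fun v => d < #(Z.filter fun u => G.Adj v u)

lemma one_lt_card_of_highDegreeVertices_nonempty {d : ℕ} {Z : Finset V}
    (h : (G.highDegreeVertices d Z).Nonempty) : 1 < #Z := by
  obtain ⟨v, hv⟩ := h
  obtain ⟨hvZ, hdeg⟩ := mem_filter.1 hv
  obtain ⟨u, hu⟩ := card_pos.1 (d.zero_le.trans_lt hdeg)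
  obtain ⟨huZ, hadj⟩ := mem_filter.1 hu
  exact one_lt_card_iff.2 ⟨v, u, hvZ, huZ, hadj.ne⟩

lemma two_mul_card_highDegreeVertices_lt [Fintype V] {α : ℕ} {Z : Finset V}
    (harb : 2 ≤ #Z → #(G.edgeFinset.filter fun e => ∀ x ∈ e, x ∈ Z) ≤ α * (#Z - 1))
    (hne : (G.highDegreeVertices (4 * α) Z).Nonempty) :
    2 * #(G.highDegreeVertices (4 * α) Z) < #Z := by
  set H := G.highDegreeVertices (4 * α) Z
  have hZ : 2 ≤ #Z := G.one_lt_card_of_highDegreeVertices_nonempty hne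
  have hdegrees : (4 * α + 1) * #H ≤ 2 * (α * (#Z - 1)) :=
    calc (4 * α + 1) * #H = ∑ _v ∈ H, (4 * α + 1) := by rw [sum_const, smul_eq_mul, mul_comm]
      _ ≤ ∑ v ∈ H, #(Z.filter fun u => G.Adj v u) :=
          sum_le_sum fun v hv => (mem_filter.1 hv).2
      _ ≤ ∑ v ∈ Z, #(Z.filter fun u => G.Adj v u) := sum_le_sum_of_subset (filter_subset _ _)
      _ = 2 * #(G.edgeFinset.filter fun e => ∀ x ∈ e, x ∈ Z) :=
          G.sum_card_filter_adj_eq_two_mul_card_edges Z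
      _ ≤ 2 * (α * (#Z - 1)) := Nat.mul_le_mul_left 2 (harb hZ)
  obtain ⟨m, hm⟩ : ∃ m, #Z = m + 1 := Nat.exists_eq_add_one_of_ne_zero (by omega)
  rw [hm, Nat.add_sub_cancel] at hdegrees
  nlinarith

end SimpleGraph

lemma Nat.pow_mul_add_one_le_of_two_mul_lt {a : ℕ → ℕ}
    (ha : ∀ k, 0 < a (k + 1) → 2 * a (k + 1) < a k) :
    ∀ k, 0 < a k → 2 ^ k * (a k + 1) ≤ a 0 + 1
  | 0, _ => by simp
  | k + 1, hpos => by
    have hstep := ha k hpos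
    calc 2 ^ (k + 1) * (a (k + 1) + 1) ≤ 2 ^ k * (a k + 1) := by
          rw [pow_succ, mul_assoc]; exact Nat.mul_le_mul_left _ (by omega)
      _ ≤ a 0 + 1 := Nat.pow_mul_add_one_le_of_two_mul_lt ha k (by omega)

lemma Nat.eq_zero_at_clog_of_two_mul_lt {a : ℕ → ℕ}
    (ha : ∀ k, 0 < a (k + 1) → 2 * a (k + 1) < a k) (h0 : 2 ≤ a 0) :
    a (Nat.clog 2 (a 0)) = 0 := by
  set c := Nat.clog 2 (a 0)
  by_contra hne
  have hbound := Nat.pow_mul_add_one_le_of_two_mul_lt ha c (Nat.pos_of_ne_zero hne)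
  have hclog : a 0 ≤ 2 ^ c := Nat.le_pow_clog one_lt_two _
  have hc : 2 ≤ 2 ^ c := Nat.le_self_pow (Nat.clog_pos one_lt_two h0).ne' 2
  have htwo : 2 ^ c * 2 ≤ 2 ^ c * (a c + 1) := Nat.mul_le_mul_left _ (by omega)
  omega

/-- With `Z 1 = V(G)` and `Z (i+1) = {v ∈ Z i : deg_{Z i}(v) > 4α}`,
the set `Z (⌈log₂ n⌉ + 1)` is empty: the H-partition with threshold `4α` has at most
`⌈log₂ n⌉ + 1` levels (here `n ≥ 2`). -/
theorem stmt5 {V : Type*} [Fintype V] (G : SimpleGraph V) (α : ℕ)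
    (hn : 2 ≤ Fintype.card V)
    (harb : ∀ U : Finset V, 2 ≤ U.card →
      (G.edgeFinset.filter fun e => ∀ x ∈ e, x ∈ U).card ≤ α * (U.card - 1))
    (Z : ℕ → Finset V) (hZ1 : Z 1 = Finset.univ)
    (hZ : ∀ i, 1 ≤ i →
      Z (i+1) = (Z i).filter fun v => 4 * α < ((Z i).filter fun u => G.Adj v u).card) :
    Z (Nat.clog 2 (Fintype.card V) + 1) = ∅ := by
  have hlevel : ∀ k, Z (k + 2) = G.highDegreeVertices (4 * α) (Z (k + 1)) :=
    fun k => hZ (k + 1) le_add_self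
  have hhalving : ∀ k, 0 < #(Z (k + 2)) → 2 * #(Z (k + 2)) < #(Z (k + 1)) := by
    intro k hpos
    rw [hlevel] at hpos ⊢
    exact G.two_mul_card_highDegreeVertices_lt (harb _) (card_pos.1 hpos)
  have hcard : #(Z (0 + 1)) = Fintype.card V := by rw [zero_add, hZ1, card_univ]
  have := Nat.eq_zero_at_clog_of_two_mul_lt (a := fun k => #(Z (k + 1))) hhalving
    (by simpa only [hcard] using hn)
  simpa only [hcard, card_eq_zero] using this
end

section
/- Let G be a graph, and suppose the vertices are ordered v_1, ..., v_n such that every vertex v_i has at most d neighbours among {v_{i+1}, ..., v_n} (a d-out-degree ordering). Then G admits a proper edge colouring f : E → ℕ such that each edge v_i v_j (i < j) satisfies f(v_i v_j) ≤ max(deg(v_i), deg(v_j)) + d - 1. -/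
/-!
Colour the edges greedily, each one with the least colour not already used on an adjacent edge,
processing the edges `v_i v_j` (`i < j`) by decreasing `i` and then increasing `j`. When `v_i v_j`
is coloured, the coloured edges adjacent to it are the other edges at `v_j` that are already
coloured (fewer than `deg v_j`) and the edges `v_i v_k` with `i < k < j` (fewer than `d`, since
`v_j` is itself a later neighbour of `v_i`), so fewer than `deg v_j + d - 1` colours are excluded.
-/

open scoped Classical

open Finset

theorem Nat.find_notMem_finset_le_card (s : Finset ℕ) :
    Nat.find (Infinite.exists_notMem_finset s) ≤ #s := by
  by_contra! h
  have hsub : range (#s + 1) ⊆ s := fun c hc =>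
    not_not.1 (Nat.find_min _ (lt_of_lt_of_le (mem_range.1 hc) h))
  simpa using card_le_card hsub

namespace Sym2

variable {V : Type*} [LinearOrder V]

/-- Ordering edges by this key processes them by decreasing lower endpoint, then by increasing
upper endpoint. -/
def dualInfSup (e : Sym2 V) : Vᵒᵈ ×ₗ V := toLex (OrderDual.toDual e.inf, e.sup)

theorem dualInfSup_injective : Function.Injective (dualInfSup : Sym2 V → Vᵒᵈ ×ₗ V) :=
  fun _ _ h => inf_eq_inf_and_sup_eq_sup.1 (by simpa [dualInfSup] using h)

theorem exists_eq_mk_of_dualInfSup_lt {u v : V} (huv : u ≤ v) {e : Sym2 V} (hu : u ∈ e)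
    (h : e.dualInfSup < s(u, v).dualInfSup) : ∃ w, u ≤ w ∧ w < v ∧ e = s(u, w) := by
  obtain ⟨w, rfl⟩ := mem_iff_exists.1 hu
  have hw : u ≤ w ∧ u < v ∧ w < v := by simpa [dualInfSup, Prod.Lex.lt_iff, huv] using h
  exact ⟨w, hw.1, hw.2.2, rfl⟩

end Sym2

namespace SimpleGraph

section Greedy

variable {α : Type*} (H : SimpleGraph α) [H.LocallyFinite] (r : α → α → Prop)

noncomputable def earlierNeighborFinset (a : α) : Finset α := {b ∈ H.neighborFinset a | r b a}

@[simp]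
theorem mem_earlierNeighborFinset {a b : α} :
    b ∈ H.earlierNeighborFinset r a ↔ H.Adj a b ∧ r b a := by
  simp [earlierNeighborFinset]

variable [IsWellOrder α r]

noncomputable def greedyColor : α → ℕ :=
  IsWellFounded.fix r fun a color => Nat.find <| Infinite.exists_notMem_finset <|
    (H.earlierNeighborFinset r a).attach.image fun b =>
      color b.1 ((H.mem_earlierNeighborFinset r).1 b.2).2

theorem greedyColor_eq (a : α) : H.greedyColor r a = Nat.find
    (Infinite.exists_notMem_finset ((H.earlierNeighborFinset r a).image (H.greedyColor r))) := by
  rw [greedyColor, IsWellFounded.fix_eq, ← greedyColor]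
  congr! 3
  simp

theorem greedyColor_notMem (a : α) :
    H.greedyColor r a ∉ (H.earlierNeighborFinset r a).image (H.greedyColor r) := by
  rw [greedyColor_eq]
  exact Nat.find_spec (Infinite.exists_notMem_finset _)

theorem greedyColor_le_card (a : α) : H.greedyColor r a ≤ #(H.earlierNeighborFinset r a) := by
  rw [greedyColor_eq]
  exact (Nat.find_notMem_finset_le_card _).trans card_image_le

theorem greedyColor_ne_of_mem_earlierNeighborFinset {a b : α}
    (hb : b ∈ H.earlierNeighborFinset r a) : H.greedyColor r b ≠ H.greedyColor r a :=
  fun h => H.greedyColor_notMem r a (mem_image.2 ⟨b, hb, h⟩)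

theorem greedyColor_ne_of_adj {a b : α} (hab : H.Adj a b) :
    H.greedyColor r a ≠ H.greedyColor r b := by
  rcases trichotomous_of r a b with h | h | h
  · exact H.greedyColor_ne_of_mem_earlierNeighborFinset r
      ((H.mem_earlierNeighborFinset r).2 ⟨hab.symm, h⟩)
  · exact absurd h hab.ne
  · exact (H.greedyColor_ne_of_mem_earlierNeighborFinset r
      ((H.mem_earlierNeighborFinset r).2 ⟨hab, h⟩)).symm

end Greedy

section LineGraph

variable {V : Type*} [LinearOrder V] (G : SimpleGraph V) [G.LocallyFinite]

theorem mem_union_image_of_adjacent_of_dualInfSup_lt {u v x : V} (huv : G.Adj u v) (hlt : u < v)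
    {e : Sym2 V} (he : e ∈ G.edgeSet) (hne : e ≠ s(u, v)) (hx : x ∈ s(u, v)) (hxe : x ∈ e)
    (hkey : e.dualInfSup < s(u, v).dualInfSup) :
    e ∈ ({w ∈ G.neighborFinset u | u < w}.erase v).image (s(u, ·)) ∪
      ((G.neighborFinset v).erase u).image (s(v, ·)) := by
  rcases Sym2.mem_iff.1 hx with rfl | rfl
  · obtain ⟨w, huw, hwv, rfl⟩ := Sym2.exists_eq_mk_of_dualInfSup_lt hlt.le hxe hkey
    have hadj : G.Adj x w := he
    refine mem_union_left _ (mem_image.2 ⟨w, ?_, rfl⟩)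
    simp [hadj, huw.lt_of_ne hadj.ne, hwv.ne]
  · obtain ⟨w, rfl⟩ := Sym2.mem_iff_exists.1 hxe
    have hadj : G.Adj x w := he
    refine mem_union_right _ (mem_image.2 ⟨w, ?_, rfl⟩)
    simp only [mem_erase, mem_neighborFinset, hadj, and_true]
    rintro rfl
    exact hne Sym2.eq_swap

theorem exists_lineGraph_coloring_add_two_le [Fintype V] :
    ∃ C : G.lineGraph.Coloring ℕ, ∀ u v (huv : G.Adj u v), u < v →
      C ⟨s(u, v), huv⟩ + 2 ≤ #{w ∈ G.neighborFinset u | u < w} + G.degree v := by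
  let key : G.edgeSet ↪ Vᵒᵈ ×ₗ V :=
    ⟨fun e => e.1.dualInfSup, Sym2.dualInfSup_injective.comp Subtype.val_injective⟩
  let r := key ⁻¹'o (· < ·)
  have : IsWellOrder G.edgeSet r := (RelEmbedding.preimage key _).isWellOrder
  refine ⟨Coloring.mk (G.lineGraph.greedyColor r) (G.lineGraph.greedyColor_ne_of_adj r),
    fun u v huv hlt => ?_⟩
  set A := {w ∈ G.neighborFinset u | u < w}.erase v
  set B := (G.neighborFinset v).erase u
  have hearlier : #(G.lineGraph.earlierNeighborFinset r ⟨s(u, v), huv⟩) ≤ #A + #B := by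
    calc _ ≤ #(A.image (s(u, ·)) ∪ B.image (s(v, ·))) :=
          card_le_card_of_injOn Subtype.val (fun e he => ?_) Subtype.val_injective.injOn
      _ ≤ #A + #B := (card_union_le _ _).trans (add_le_add card_image_le card_image_le)
    obtain ⟨hadj, hkey⟩ := (G.lineGraph.mem_earlierNeighborFinset r).1 he
    obtain ⟨hne, x, hx, hxe⟩ := G.lineGraph_adj_iff_exists.1 hadj
    exact G.mem_union_image_of_adjacent_of_dualInfSup_lt huv hlt e.2
      (fun h => hne (Subtype.ext h.symm)) hx hxe hkey
  have hA : #A + 1 = #{w ∈ G.neighborFinset u | u < w} :=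
    card_erase_add_one (by simp [huv, hlt])
  have hB : #B + 1 = G.degree v := by
    rw [← card_neighborFinset_eq_degree]
    exact card_erase_add_one (by simp [huv.symm])
  have := G.lineGraph.greedyColor_le_card r ⟨s(u, v), huv⟩
  show G.lineGraph.greedyColor r _ + 2 ≤ _
  omega

end LineGraph

end SimpleGraph

/-- If the vertices are ordered `v_1, ..., v_n` so that every vertex has at most
`d` neighbours later in the order, then `G` has a proper edge colouring in which each edge
`v_i v_j` (`i < j`) gets a colour in `{1, ..., max(deg v_i, deg v_j) + d - 1}`. -/
theorem stmt6 {V : Type*} [Fintype V] (G : SimpleGraph V) (d : ℕ)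
    (ord : V ≃ Fin (Fintype.card V))
    (hord : ∀ v : V, (Finset.univ.filter fun u => G.Adj v u ∧ ord v < ord u).card ≤ d) :
    ∃ f : Sym2 V → ℕ,
      (∀ u v w : V, G.Adj u v → G.Adj u w → v ≠ w → f s(u, v) ≠ f s(u, w)) ∧
      (∀ u v : V, G.Adj u v →
        1 ≤ f s(u, v) ∧ f s(u, v) ≤ max (G.degree u) (G.degree v) + d - 1) := by
  let : LinearOrder V := LinearOrder.lift' ord ord.injective
  obtain ⟨C, hC⟩ := G.exists_lineGraph_coloring_add_two_le
  have hlater (x : V) : #{w ∈ G.neighborFinset x | x < w} ≤ d :=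
    (hord x).trans' (card_le_card fun w hw => by
      simp only [mem_filter, mem_univ, SimpleGraph.mem_neighborFinset, true_and] at hw ⊢
      exact hw)
  refine ⟨fun e => if he : e ∈ G.edgeSet then C ⟨e, he⟩ + 1 else 0, ?_, ?_⟩
  · intro u v w huv huw hvw
    have hadj : G.lineGraph.Adj ⟨s(u, v), huv⟩ ⟨s(u, w), huw⟩ :=
      G.lineGraph_adj_iff_exists.2 ⟨fun h => hvw (Sym2.congr_right.1 (Subtype.ext_iff.1 h)),
        u, Sym2.mem_mk_left _ _, Sym2.mem_mk_left _ _⟩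
    simpa [huv, huw] using C.valid hadj
  · intro u v huv
    simp only [dif_pos (G.mem_edgeSet.2 huv)]
    refine ⟨le_add_self, ?_⟩
    rcases huv.ne.lt_or_gt with h | h
    · have := hC u v huv h
      have := hlater u
      omega
    · have := hC v u huv.symm h
      have := hlater v
      rw [show (⟨s(u, v), huv⟩ : G.edgeSet) = ⟨s(v, u), huv.symm⟩ from Subtype.ext Sym2.eq_swap]
      omega
end

section
/- Every graph G with arboricity α and maximum degree Δ admits a proper edge colouring using at most Δ + 2α - 2 colours, such that moreover every edge uv receives a colour in {1, ..., max(deg(u), deg(v)) + 2α - 2}. -/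
/-!
If the edges of `G` lie in `α` forests, then any `n` vertices carry at most `α (n - 1)` edges, so
every subgraph with an edge has a vertex `u` of positive degree at most `2α - 1`. Delete an edge
`uv` at such a vertex, colour the rest by induction, and give `uv` a colour missing from the at
most `(2α - 2) + (deg v - 1)` edges adjacent to it: the palette `{1, …, deg v + 2α - 2}` has room.
-/

open scoped Classical

open Finset

namespace SimpleGraph

variable {V : Type*} {G H F : SimpleGraph V}

def ArboricityLE (G : SimpleGraph V) (α : ℕ) : Prop :=
  ∃ c : Sym2 V → ℕ, (∀ e ∈ G.edgeSet, c e < α) ∧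
    ∀ i, (fromEdgeSet {e | e ∈ G.edgeSet ∧ c e = i}).IsAcyclic

theorem ArboricityLE.mono {α : ℕ} (h : G.ArboricityLE α) (hHG : H ≤ G) : H.ArboricityLE α := by
  obtain ⟨c, hc, hacyc⟩ := h
  refine ⟨c, fun e he ↦ hc e (edgeSet_mono hHG he), fun i ↦ (hacyc i).anti ?_⟩
  exact fromEdgeSet_mono fun e he ↦ ⟨edgeSet_mono hHG he.1, he.2⟩

theorem ArboricityLE.pos {α : ℕ} (h : G.ArboricityLE α) (hne : G.edgeSet.Nonempty) : 0 < α := by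
  obtain ⟨c, hc, -⟩ := h
  obtain ⟨e, he⟩ := hne
  exact (Nat.zero_le _).trans_lt (hc e he)

section EdgeColoring

variable {K : Type*}

def IsProperEdgeColoring (G : SimpleGraph V) (f : Sym2 V → K) : Prop :=
  ∀ u v w, G.Adj u v → G.Adj u w → v ≠ w → f s(u, v) ≠ f s(u, w)

theorem IsProperEdgeColoring.update {f : Sym2 V → K} {u v : V} {k : K}
    (hf : (G.deleteEdges {s(u, v)}).IsProperEdgeColoring f)
    (hk : ∀ x ∈ s(u, v), ∀ w, (G.deleteEdges {s(u, v)}).Adj x w → f s(x, w) ≠ k) :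
    G.IsProperEdgeColoring (Function.update f s(u, v) k) := by
  intro x y z hxy hxz hyz
  have hne : s(x, y) ≠ s(x, z) := fun h ↦ hyz (Sym2.congr_right.mp h)
  have hdel (w : V) (hxw : G.Adj x w) (hw : s(x, w) ≠ s(u, v)) :
      (G.deleteEdges {s(u, v)}).Adj x w := deleteEdges_adj.mpr ⟨hxw, hw⟩
  by_cases h₁ : s(x, y) = s(u, v)
  · have h₂ : s(x, z) ≠ s(u, v) := h₁ ▸ hne.symm
    rw [Function.update_of_ne h₂, h₁, Function.update_self]
    exact (hk x (h₁ ▸ Sym2.mem_mk_left x y) z (hdel z hxz h₂)).symm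
  by_cases h₂ : s(x, z) = s(u, v)
  · rw [Function.update_of_ne h₁, h₂, Function.update_self]
    exact hk x (h₂ ▸ Sym2.mem_mk_left x z) y (hdel y hxy h₁)
  rw [Function.update_of_ne h₁, Function.update_of_ne h₂]
  exact hf x y z (hdel y hxy h₁) (hdel z hxz h₂) hyz

end EdgeColoring

variable [Fintype V]

theorem IsAcyclic.card_edgeFinset_le [Fintype F.edgeSet] (hF : F.IsAcyclic) :
    #F.edgeFinset ≤ Fintype.card V - 1 := by
  cases isEmpty_or_nonempty V
  · simp [Finset.eq_empty_of_isEmpty F.edgeFinset]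
  obtain ⟨T, hFT, -, hT⟩ := connected_top.exists_isTree_le_of_le_of_isAcyclic le_top hF
  have := hT.card_edgeFinset
  have := card_le_card (edgeFinset_mono hFT)
  omega

theorem IsAcyclic.card_edgeFinset_le_of_support_subset [Fintype F.edgeSet] (hF : F.IsAcyclic)
    {s : Finset V} (hs : F.support ⊆ s) : #F.edgeFinset ≤ #s - 1 := by
  convert (hF.induce s).card_edgeFinset_le using 1
  · convert (card_edgeFinset_induce_of_support_subset hs).symm
  · simp

theorem ArboricityLE.card_edgeFinset_le {α : ℕ} (h : G.ArboricityLE α) {s : Finset V}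
    (hs : G.support ⊆ s) : #G.edgeFinset ≤ α * (#s - 1) := by
  obtain ⟨c, hc, hacyc⟩ := h
  set F : ℕ → SimpleGraph V := fun i ↦ fromEdgeSet {e | e ∈ G.edgeSet ∧ c e = i}
  have hFG (i : ℕ) : F i ≤ G := (fromEdgeSet_le G).mpr fun e he ↦ he.1.1
  have hcover : G.edgeFinset ⊆ (range α).biUnion fun i ↦ (F i).edgeFinset := by
    intro e he
    rw [mem_edgeFinset] at he
    refine mem_biUnion.mpr ⟨c e, mem_range.mpr (hc e he), ?_⟩
    simpa [F, he] using not_isDiag_of_mem_edgeSet G he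
  calc #G.edgeFinset ≤ ∑ i ∈ range α, #(F i).edgeFinset :=
        (card_le_card hcover).trans card_biUnion_le
    _ ≤ ∑ _i ∈ range α, (#s - 1) := sum_le_sum fun i _ ↦
        (hacyc i).card_edgeFinset_le_of_support_subset ((support_mono (hFG i)).trans hs)
    _ = α * (#s - 1) := by simp

theorem ArboricityLE.exists_degree_lt {α : ℕ} (h : G.ArboricityLE α) (hne : G.edgeSet.Nonempty) :
    ∃ u, 0 < G.degree u ∧ G.degree u < 2 * α := by
  by_contra! hlarge
  have hα := h.pos hne
  have hs : 0 < #G.support.toFinset := by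
    obtain ⟨e, he⟩ := hne
    induction e using Sym2.ind with
    | _ x y => exact card_pos.mpr ⟨x, by simpa using ⟨y, he⟩⟩
  have hdeg : 2 * α * #G.support.toFinset ≤ 2 * #G.edgeFinset := by
    rw [← sum_degrees_eq_twice_card_edges,
      ← sum_subset (subset_univ _) fun v _ hv ↦ ?_]
    · rw [mul_comm]
      exact card_nsmul_le_sum _ _ _ fun v hv ↦
        hlarge v ((degree_pos_iff_mem_support G v).mpr (by simpa using hv))
    · simpa [degree_eq_zero_iff_notMem_support] using hv
  have hedges := h.card_edgeFinset_le (s := G.support.toFinset) (by simp)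
  have : 2 * α * #G.support.toFinset ≤ 2 * α * (#G.support.toFinset - 1) :=
    hdeg.trans (by rw [mul_assoc]; omega)
  have := Nat.le_of_mul_le_mul_left this (by omega)
  omega

/-- Subgraphs are spanning, so the vertex of small degree must be required to be non-isolated. -/
def Degenerate (G : SimpleGraph V) (k : ℕ) : Prop :=
  ∀ H ≤ G, H.edgeSet.Nonempty → ∃ u, 0 < H.degree u ∧ H.degree u ≤ k

theorem ArboricityLE.degenerate {α : ℕ} (h : G.ArboricityLE α) : G.Degenerate (2 * α - 1) :=
  fun _ hHG hne ↦
    let ⟨u, hu, huα⟩ := (h.mono hHG).exists_degree_lt hne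
    ⟨u, hu, by omega⟩

theorem Adj.exists_free_color (f : Sym2 V → ℕ) {u v : V} (huv : G.Adj u v) {N : ℕ}
    (hN : G.degree u + G.degree v ≤ N + 1) :
    ∃ k ∈ Icc 1 N, ∀ x ∈ s(u, v), ∀ w, (G.deleteEdges {s(u, v)}).Adj x w → f s(x, w) ≠ k := by
  set T := ((G.neighborFinset u).erase v).image (fun w ↦ f s(u, w)) ∪
    ((G.neighborFinset v).erase u).image (fun w ↦ f s(v, w))
  have hT : #T < #(Icc 1 N) := by
    have hu := card_erase_of_mem ((mem_neighborFinset G u v).mpr huv)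
    have hv := card_erase_of_mem ((mem_neighborFinset G v u).mpr huv.symm)
    have : #T ≤ _ := (card_union_le _ _).trans (add_le_add card_image_le card_image_le)
    rw [card_neighborFinset_eq_degree] at hu hv
    have := huv.degree_pos_left
    have := huv.degree_pos_right
    simp only [Nat.card_Icc]
    omega
  obtain ⟨k, hk, hkT⟩ := exists_mem_notMem_of_card_lt_card hT
  refine ⟨k, hk, fun x hx w hxw hfk ↦ hkT ?_⟩
  obtain ⟨hxw, hne⟩ := deleteEdges_adj.mp hxw
  rcases Sym2.mem_iff.mp hx with rfl | rfl
  · exact mem_union_left _ (mem_image.mpr ⟨w, by simp_all, hfk⟩)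
  · exact mem_union_right _ (mem_image.mpr ⟨w, by simp_all, hfk⟩)

theorem Degenerate.exists_isProperEdgeColoring {k : ℕ} (hG : G.Degenerate k) :
    ∃ f : Sym2 V → ℕ, G.IsProperEdgeColoring f ∧
      ∀ u v, G.Adj u v → f s(u, v) ∈ Icc 1 (max (G.degree u) (G.degree v) + k - 1) := by
  suffices ∀ H ≤ G, ∃ f : Sym2 V → ℕ, H.IsProperEdgeColoring f ∧
      ∀ u v, H.Adj u v → f s(u, v) ∈ Icc 1 (max (G.degree u) (G.degree v) + k - 1) from
    this G le_rfl
  intro H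
  induction H using WellFoundedLT.induction with | _ H ih => ?_
  intro hHG
  rcases H.edgeSet.eq_empty_or_nonempty with hempty | hne
  · have hnadj (u v : V) : ¬ H.Adj u v := fun huv ↦
      Set.eq_empty_iff_forall_notMem.mp hempty _ (H.mem_edgeSet.mpr huv)
    exact ⟨fun _ ↦ 0, fun u v _ huv ↦ (hnadj u v huv).elim, fun u v huv ↦ (hnadj u v huv).elim⟩
  obtain ⟨u, hu, huk⟩ := hG H hHG hne
  obtain ⟨v, huv⟩ := (degree_pos_iff_exists_adj H u).mp hu
  have hlt : H.deleteEdges {s(u, v)} < H :=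
    lt_of_le_not_ge (deleteEdges_le _) fun h ↦ (deleteEdges_adj.mp (h huv)).2 rfl
  obtain ⟨f, hf, hfb⟩ := ih _ hlt ((deleteEdges_le _).trans hHG)
  obtain ⟨c, hc, hfree⟩ := huv.exists_free_color f (N := G.degree v + k - 1)
    (by have := degree_le_of_le (v := v) hHG; omega)
  refine ⟨Function.update f s(u, v) c, hf.update hfree, fun x y hxy ↦ ?_⟩
  by_cases h : s(x, y) = s(u, v)
  · rw [h, Function.update_self]
    refine Icc_subset_Icc_right ?_ hc
    rcases Sym2.eq_iff.mp h with ⟨-, rfl⟩ | ⟨rfl, -⟩ <;> gcongr <;> simp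
  · rw [Function.update_of_ne h]
    exact hfb x y (deleteEdges_adj.mpr ⟨hxy, h⟩)

end SimpleGraph

/-- Every graph with arboricity `α` (edges partition into `α` forests) and maximum
degree `Δ` has a proper edge colouring with at most `Δ + 2α - 2` colours, in which moreover
every edge `uv` gets a colour in `{1, ..., max(deg u, deg v) + 2α - 2}`. -/
theorem stmt7 {V : Type*} [Fintype V] (G : SimpleGraph V) (α : ℕ)
    (harb : ∃ c : Sym2 V → ℕ, (∀ e ∈ G.edgeSet, c e < α) ∧
      ∀ i, (SimpleGraph.fromEdgeSet {e | e ∈ G.edgeSet ∧ c e = i}).IsAcyclic) :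
    ∃ f : Sym2 V → ℕ,
      (∀ u v w : V, G.Adj u v → G.Adj u w → v ≠ w → f s(u, v) ≠ f s(u, w)) ∧
      (∀ u v : V, G.Adj u v →
        1 ≤ f s(u, v) ∧ f s(u, v) ≤ max (G.degree u) (G.degree v) + 2 * α - 2 ∧
          f s(u, v) ≤ G.maxDegree + 2 * α - 2) := by
  have hG : G.ArboricityLE α := harb
  obtain ⟨f, hf, hbound⟩ := hG.degenerate.exists_isProperEdgeColoring
  refine ⟨f, hf, fun u v huv ↦ ?_⟩
  have hα := hG.pos ⟨s(u, v), huv⟩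
  have hfuv := mem_Icc.mp (hbound u v huv)
  have := max_le (G.degree_le_maxDegree u) (G.degree_le_maxDegree v)
  omega
end

section
/- Let G be a graph with a vertex partition H_1, ..., H_k (levels), let l(v) denote the level of v, and suppose every vertex v has at most d neighbours u with l(u) ≥ l(v). Then G admits a proper edge colouring with at most Δ + d - 1 colours, where Δ is the maximum degree of G, and moreover each edge uv with l(u) ≤ l(v) receives a colour in {1, ..., deg(v) + d - 1}. -/
/-!
Colour the edges greedily, in non-increasing order of their level `min (l u) (l v)`: an edge met by
`m` already coloured edges gets a colour in `1, …, m + 1` that none of them uses. When an edge `uv`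
with `l u ≤ l v` is coloured, the coloured edges meeting it are other edges at `v` (at most
`deg v - 1` of them) and edges `uw` with `w ≠ v` and `l w ≥ l u` (at most `d - 1` of them), so its
colour is at most `deg v + d - 1`.
-/

open scoped Classical

open Finset

namespace SimpleGraph

theorem exists_greedy_coloring {α β : Type*} [Fintype α] [LinearOrder β] (H : SimpleGraph α)
    (key : α → β) :
    ∃ c : α → ℕ, (∀ a b, H.Adj a b → c a ≠ c b) ∧
      ∀ a, 1 ≤ c a ∧ c a ≤ #{b | H.Adj a b ∧ key a ≤ key b} + 1 := by
  suffices h : ∀ s : Finset α, ∃ c : α → ℕ, (∀ a ∈ s, ∀ b ∈ s, H.Adj a b → c a ≠ c b) ∧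
      ∀ a ∈ s, 1 ≤ c a ∧ c a ≤ #{b | H.Adj a b ∧ key a ≤ key b} + 1 by
    obtain ⟨c, hproper, hbound⟩ := h univ
    exact ⟨c, fun a b => hproper a (mem_univ a) b (mem_univ b), fun a => hbound a (mem_univ a)⟩
  intro s
  -- Elements are inserted in non-increasing order of `key`, so the neighbours of the new element
  -- `a` that are already coloured all have key at least `key a`.
  induction s using Finset.induction_on_min_value key with
  | empty => exact ⟨0, by simp, by simp⟩
  | insert a s has hmin ih =>
    obtain ⟨c, hproper, hbound⟩ := ih
    set used := {b ∈ s | H.Adj a b}.image c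
    have hused : #used ≤ #{b | H.Adj a b ∧ key a ≤ key b} :=
      card_image_le.trans <| card_le_card fun b hb => by
        simp only [mem_filter, mem_univ, true_and] at hb ⊢
        exact ⟨hb.2, hmin b hb.1⟩
    obtain ⟨n, hn, hfree⟩ := exists_mem_notMem_of_card_lt_card (s := used)
      (t := Icc 1 (#used + 1)) (by simp)
    have hne : ∀ b ∈ s, b ≠ a := fun b hb h => has (h ▸ hb)
    have hfree' : ∀ b ∈ s, H.Adj a b → n ≠ c b := fun b hb hab h =>
      hfree (mem_image.mpr ⟨b, mem_filter.mpr ⟨hb, hab⟩, h.symm⟩)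
    refine ⟨Function.update c a n, ?_, ?_⟩
    · intro x hx y hy hxy
      rcases mem_insert.mp hx with rfl | hxs <;> rcases mem_insert.mp hy with rfl | hys
      · exact (H.ne_of_adj hxy rfl).elim
      · simpa [hne y hys] using hfree' y hys hxy
      · simpa [hne x hxs] using (hfree' x hxs hxy.symm).symm
      · simpa [hne x hxs, hne y hys] using hproper x hxs y hys hxy
    · intro x hx
      rcases mem_insert.mp hx with rfl | hxs
      · simp only [Function.update_self]
        have := mem_Icc.mp hn
        omega
      · simpa [hne x hxs] using hbound x hxs

theorem card_lineGraph_adj_inf_le {V β : Type*} [Fintype V] [LinearOrder β] (G : SimpleGraph V)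
    (l : V → β) {u v : V} (huv : G.Adj u v) (hle : l u ≤ l v) :
    #{e : G.edgeSet | G.lineGraph.Adj ⟨s(u, v), huv⟩ e ∧
        (s(u, v).map l).inf ≤ (e.1.map l).inf} + 2 ≤
      G.degree v + #{w | G.Adj u w ∧ l u ≤ l w} := by
  set T : Finset G.edgeSet :=
    {e | G.lineGraph.Adj ⟨s(u, v), huv⟩ e ∧ (s(u, v).map l).inf ≤ (e.1.map l).inf}
  set S : Finset V := {w | G.Adj u w ∧ l u ≤ l w}
  have hsub : T.map (Function.Embedding.subtype _) ⊆
      ((G.neighborFinset v).erase u).image (s(v, ·)) ∪ (S.erase v).image (s(u, ·)) := by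
    intro e he
    obtain ⟨⟨e, heG⟩, heT, rfl⟩ := mem_map.mp he
    obtain ⟨⟨hne, x, hxuv, hxe⟩, hkey⟩ := by
      simpa only [T, mem_filter, mem_univ, true_and, lineGraph_adj_iff_exists] using heT
    simp only [Function.Embedding.coe_subtype, mem_union, mem_image, mem_erase,
      mem_neighborFinset, S, mem_filter, mem_univ, true_and]
    by_cases hv : v ∈ e
    · obtain ⟨w, rfl⟩ := Sym2.mem_iff_exists.mp hv
      refine Or.inl ⟨w, ⟨?_, heG⟩, rfl⟩
      rintro rfl
      exact hne (Subtype.ext Sym2.eq_swap)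
    · obtain rfl : x = u := by
        rcases Sym2.mem_iff.mp hxuv with rfl | rfl
        · rfl
        · exact (hv hxe).elim
      obtain ⟨w, rfl⟩ := Sym2.mem_iff_exists.mp hxe
      refine Or.inr ⟨w, ⟨fun h => hv (h ▸ Sym2.mem_mk_right x w), heG, ?_⟩, rfl⟩
      simpa [hle] using hkey
  have hvS : v ∈ S := by simp [S, huv, hle]
  calc #T + 2 = #(T.map (Function.Embedding.subtype _)) + 2 := by rw [card_map]
    _ ≤ #(((G.neighborFinset v).erase u).image (s(v, ·)) ∪ (S.erase v).image (s(u, ·))) + 2 :=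
      by gcongr
    _ ≤ (#((G.neighborFinset v).erase u) + 1) + (#(S.erase v) + 1) := by
      grw [card_union_le, card_image_le, card_image_le]
      omega
    _ = G.degree v + #S := by
      rw [card_erase_add_one ((mem_neighborFinset _ _ _).mpr huv.symm), card_erase_add_one hvS,
        card_neighborFinset_eq_degree]

end SimpleGraph

theorem stmt9_general {V : Type*} [Fintype V] (G : SimpleGraph V) (d : ℕ)
    (l : V → ℕ)
    (hout : ∀ v : V, (Finset.univ.filter fun u => G.Adj v u ∧ l v ≤ l u).card ≤ d) :
    ∃ f : Sym2 V → ℕ,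
      (∀ u v w : V, G.Adj u v → G.Adj u w → v ≠ w → f s(u, v) ≠ f s(u, w)) ∧
      (∀ u v : V, G.Adj u v → 1 ≤ f s(u, v) ∧ f s(u, v) ≤ G.maxDegree + d - 1 ∧
        (l u ≤ l v → f s(u, v) ≤ G.degree v + d - 1)) := by
  obtain ⟨c, hproper, hbound⟩ := G.lineGraph.exists_greedy_coloring fun e => (e.1.map l).inf
  let f : Sym2 V → ℕ := fun e => if h : e ∈ G.edgeSet then c ⟨e, h⟩ else 0
  have hf : ∀ {u v} (h : G.Adj u v), f s(u, v) = c ⟨s(u, v), h⟩ := fun h => dif_pos h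
  have hlevel : ∀ {u v} (h : G.Adj u v), l u ≤ l v → f s(u, v) ≤ G.degree v + d - 1 := by
    intro u v h hle
    have hcard := G.card_lineGraph_adj_inf_le l h hle
    have hc := (hbound ⟨s(u, v), h⟩).2
    dsimp only at hc
    have hd := hout u
    rw [hf h]
    omega
  refine ⟨f, fun u v w huv huw hvw => ?_, fun u v huv => ⟨?_, ?_, hlevel huv⟩⟩
  · rw [hf huv, hf huw]
    refine hproper _ _ ⟨fun h => hvw ?_, u, Sym2.mem_mk_left u v, Sym2.mem_mk_left u w⟩
    exact Sym2.congr_right.mp (congrArg Subtype.val h)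
  · exact hf huv ▸ (hbound _).1
  · rcases le_total (l u) (l v) with hle | hle
    · exact (hlevel huv hle).trans (by have := G.degree_le_maxDegree v; omega)
    · rw [Sym2.eq_swap]
      exact (hlevel huv.symm hle).trans (by have := G.degree_le_maxDegree u; omega)

/-- Given a vertex partition into levels `1, ..., k` such that every vertex `v` has
at most `d` neighbours `u` with `l u ≥ l v`, the graph has a proper edge colouring with at most
`Δ + d - 1` colours, where each edge `uv` with `l u ≤ l v` gets a colour in
`{1, ..., deg v + d - 1}`. -/
theorem stmt9 {V : Type*} [Fintype V] (G : SimpleGraph V) (k d : ℕ)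
    (l : V → ℕ) (hl : ∀ v, 1 ≤ l v ∧ l v ≤ k)
    (hout : ∀ v : V, (Finset.univ.filter fun u => G.Adj v u ∧ l v ≤ l u).card ≤ d) :
    ∃ f : Sym2 V → ℕ,
      (∀ u v w : V, G.Adj u v → G.Adj u w → v ≠ w → f s(u, v) ≠ f s(u, w)) ∧
      (∀ u v : V, G.Adj u v → 1 ≤ f s(u, v) ∧ f s(u, v) ≤ G.maxDegree + d - 1 ∧
        (l u ≤ l v → f s(u, v) ≤ G.degree v + d - 1)) :=
  stmt9_general G d l hout
end

section
/- Consider a potential function on a graph with vertex levels l : V → {1,...,k}: for an edge uv define ψ(uv) = 2(k - min(l(u), l(v))) + [l(u) = l(v)]. If the level of a single vertex v is incremented from i to i+1, then the total edge potential ∑_e ψ(e) decreases by at least the number of neighbours u of v with l(u) ≥ i (each such edge's potential drops by 1 or 2), and no edge potential increases. -/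
/-!
Raising `l v` from `i` to `i + 1` only affects edges at `v`. On an edge `vu` with `l u < i`
nothing changes; with `l u > i + 1` the minimum rises by one, so `ψ` drops by 2; with
`l u ∈ {i, i + 1}` the equality indicator and the minimum trade off to a drop of exactly 1.
-/

open scoped Classical

/-- The edge potential `ψ(uv) = 2(k - min(l u, l v)) + [l u = l v]`. -/
noncomputable def psi {V : Type*} (k : ℕ) (l : V → ℕ) : Sym2 V → ℤ :=
  Sym2.lift ⟨fun u w => 2 * ((k : ℤ) - min (l u) (l w)) + (if l u = l w then 1 else 0),
    fun u w => by
      have h1 : min (l u) (l w) = min (l w) (l u) := min_comm _ _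
      have h2 : (if l u = l w then (1 : ℤ) else 0) = (if l w = l u then 1 else 0) := by
        simp [eq_comm]
      dsimp only
      rw [h1, h2]⟩

theorem Finset.sum_add_card_le_sum {ι R : Type*} [AddCommMonoidWithOne R] [PartialOrder R]
    [IsOrderedAddMonoid R] {s t : Finset ι} {f g : ι → R} (hts : t ⊆ s)
    (hle : ∀ i ∈ s, f i ≤ g i) (hlt : ∀ i ∈ t, f i + 1 ≤ g i) :
    ∑ i ∈ s, f i + t.card ≤ ∑ i ∈ s, g i := by
  rw [← Finset.sum_sdiff hts, ← Finset.sum_sdiff hts, add_assoc, Finset.card_eq_sum_ones,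
    Nat.cast_sum, Nat.cast_one, ← Finset.sum_add_distrib]
  exact add_le_add (Finset.sum_le_sum fun i hi => hle i (Finset.mem_sdiff.1 hi).1)
    (Finset.sum_le_sum hlt)

namespace psi

variable {V : Type*} (k : ℕ) (l : V → ℕ)

theorem mk (u w : V) :
    psi k l s(u, w) = 2 * ((k : ℤ) - min (l u) (l w)) + (if l u = l w then 1 else 0) := rfl

theorem update_of_notMem [DecidableEq V] {v : V} {e : Sym2 V} (hv : v ∉ e) (n : ℕ) :
    psi k (Function.update l v n) e = psi k l e := by
  induction e using Sym2.ind with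
  | _ u w =>
    obtain ⟨hu, hw⟩ : u ≠ v ∧ w ≠ v := by simpa [eq_comm] using hv
    rw [mk, mk, Function.update_of_ne hu, Function.update_of_ne hw]

theorem update_succ_mk_le [DecidableEq V] (v u : V) :
    psi k (Function.update l v (l v + 1)) s(v, u) ≤ psi k l s(v, u) := by
  rcases eq_or_ne u v with rfl | hu
  · simp only [mk, Function.update_self]
    push_cast
    omega
  · rw [mk, mk, Function.update_self, Function.update_of_ne hu]
    split_ifs <;> push_cast <;> omega

theorem update_succ_mk_add_one_le [DecidableEq V] {v u : V} (hu : u ≠ v) (hlu : l v ≤ l u) :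
    psi k (Function.update l v (l v + 1)) s(v, u) + 1 ≤ psi k l s(v, u) := by
  rw [mk, mk, Function.update_self, Function.update_of_ne hu]
  split_ifs <;> push_cast <;> omega

theorem update_succ_le [DecidableEq V] (v : V) (e : Sym2 V) :
    psi k (Function.update l v (l v + 1)) e ≤ psi k l e := by
  by_cases hv : v ∈ e
  · rw [← Sym2.other_spec hv]
    exact update_succ_mk_le k l v _
  · rw [update_of_notMem k l hv]

end psi

/-- If the level of a single vertex `v` is incremented from `i` to `i + 1`, then
no edge potential increases, and the total edge potential `∑ ψ(e)` drops by at least the number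
of neighbours `u` of `v` with `l u ≥ i`. -/
theorem stmt18 {V : Type*} [Fintype V] [DecidableEq V] (G : SimpleGraph V)
    (k i : ℕ) (l : V → ℕ) (v : V) (hv : l v = i) :
    (∀ e ∈ G.edgeFinset, psi k (Function.update l v (i + 1)) e ≤ psi k l e) ∧
    (∑ e ∈ G.edgeFinset, psi k (Function.update l v (i + 1)) e)
        + ((Finset.univ.filter fun u => G.Adj v u ∧ i ≤ l u).card : ℤ)
      ≤ ∑ e ∈ G.edgeFinset, psi k l e := by
  subst hv
  refine ⟨fun e _ => psi.update_succ_le k l v e, ?_⟩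
  rw [← Finset.card_map (Sym2.mkEmbedding v)]
  refine Finset.sum_add_card_le_sum ?_ (fun e _ => psi.update_succ_le k l v e) ?_
  · intro e he
    obtain ⟨u, hu, rfl⟩ := Finset.mem_map.1 he
    exact SimpleGraph.mem_edgeFinset.2 (Finset.mem_filter.1 hu).2.1
  · intro e he
    obtain ⟨u, hu, rfl⟩ := Finset.mem_map.1 he
    obtain ⟨-, hadj, hlu⟩ := Finset.mem_filter.1 hu
    exact psi.update_succ_mk_add_one_le k l hadj.ne' hlu
end

section
/- Let G be a graph with arboricity α, and partition levels 1,...,L·⌈log₂ n⌉ into groups of size L = 1 + ⌈log₂ n⌉, where a vertex at level in group g has at most 2·5·2^g out-neighbours (neighbours at its level or higher) and at least 2^g neighbours at the level directly below. Then every vertex lies in a group g ≤ ⌈log₂(4α)⌉; in particular the maximum level is O(log α · log n). -/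
open scoped Classical

/-!
Write `T j` for the set of vertices at level `≥ j`. Above level `L(⌈log₂ 4α⌉ - 1)` every vertex
has at least `4α` neighbours one level down, and charging each such vertex of `T j` with these
edges puts at least `4α |T j|` edges inside `T (j - 1)`. Arboricity `α` allows at most
`α (|T (j-1)| - 1)`, so `|T j| ≤ |T (j-1)| / 2`. After `L = 1 + ⌈log₂ n⌉` such halvings no vertex
is left, so every level is below `L ⌈log₂ 4α⌉`, i.e. in a group `≤ ⌈log₂ 4α⌉`.
-/

open Finset

namespace SimpleGraph

variable {V : Type*} [Fintype V] (G : SimpleGraph V)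

noncomputable def edgesWithin (U : Finset V) : Finset (Sym2 V) :=
  {e ∈ G.edgeFinset | ∀ x ∈ e, x ∈ U}

variable {G}

theorem card_edgesWithin_le {α : ℕ}
    (hG : ∀ U : Finset V, 2 ≤ #U → #(G.edgesWithin U) ≤ α * (#U - 1)) (U : Finset V) :
    #(G.edgesWithin U) ≤ α * (#U - 1) := by
  rcases le_or_gt 2 #U with hU | hU
  · exact hG U hU
  · suffices G.edgesWithin U = ∅ by simp [this]
    refine eq_empty_iff_forall_notMem.mpr fun e he => ?_
    induction e using Sym2.ind with
    | _ a b =>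
      simp only [edgesWithin, mem_filter, mem_edgeFinset, mem_edgeSet] at he
      obtain ⟨hab, hU'⟩ := he
      have : 1 < #U := one_lt_card.mpr ⟨a, hU' a (by simp), b, hU' b (by simp), hab.ne⟩
      omega

/-- Each edge is charged only to its endpoint with the larger value of `f`, so the charging is
injective. -/
theorem mul_card_le_card_edgesWithin (f : V → ℕ) {S U : Finset V} (hSU : S ⊆ U) {k : ℕ}
    (hS : ∀ w ∈ S, k ≤ #{u ∈ U | G.Adj w u ∧ f u < f w}) :
    k * #S ≤ #(G.edgesWithin U) := by
  set D : V → Finset V := fun w => {u ∈ U | G.Adj w u ∧ f u < f w}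
  calc k * #S = ∑ _w ∈ S, k := by rw [sum_const, smul_eq_mul, mul_comm]
    _ ≤ ∑ w ∈ S, #(D w) := sum_le_sum hS
    _ = #(S.sigma D) := (card_sigma _ _).symm
    _ ≤ #(G.edgesWithin U) := by
      refine card_le_card_of_injOn (fun p => s(p.1, p.2)) ?_ ?_
      · rintro ⟨w, u⟩ hwu
        simp only [coe_sigma, Set.mem_sigma_iff, mem_coe, D, mem_filter] at hwu
        obtain ⟨hw, hu, hadj, -⟩ := hwu
        simp only [edgesWithin, coe_filter, Set.mem_ofPred_eq, mem_edgeFinset, mem_edgeSet,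
          Sym2.mem_iff]
        exact ⟨hadj, by rintro x (rfl | rfl) <;> [exact hSU hw; exact hu]⟩
      · rintro ⟨w₁, u₁⟩ h₁ ⟨w₂, u₂⟩ h₂ heq
        simp only [coe_sigma, Set.mem_sigma_iff, mem_coe, D, mem_filter] at h₁ h₂
        rcases Sym2.eq_iff.mp heq with ⟨rfl, rfl⟩ | ⟨rfl, rfl⟩
        · rfl
        · dsimp only at h₁ h₂
          omega

theorem two_mul_card_le_of_forall_le_card_lower_adj {α : ℕ} (hα : 0 < α)
    (hG : ∀ U : Finset V, #(G.edgesWithin U) ≤ α * (#U - 1)) (f : V → ℕ) {S U : Finset V}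
    (hSU : S ⊆ U) (hS : ∀ w ∈ S, 2 * α ≤ #{u ∈ U | G.Adj w u ∧ f u < f w}) :
    2 * #S ≤ #U := by
  have h := (mul_card_le_card_edgesWithin f hSU hS).trans (hG U)
  rw [mul_comm 2 α, mul_assoc] at h
  have := Nat.le_of_mul_le_mul_left h hα
  omega

variable {α : ℕ} (hα : 0 < α) (hG : ∀ U : Finset V, #(G.edgesWithin U) ≤ α * (#U - 1))
  (l : V → ℕ) {j₀ : ℕ}
include hα hG

theorem two_pow_mul_card_le_of_forall_le_card_adj_pred
    (hdown : ∀ w, j₀ < l w → 2 * α ≤ #{u | G.Adj w u ∧ l u = l w - 1}) (k : ℕ) :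
    2 ^ k * #{u | j₀ + k ≤ l u} ≤ #{u | j₀ ≤ l u} := by
  induction k with
  | zero => simp
  | succ k ih =>
    have halve : 2 * #{u | j₀ + (k + 1) ≤ l u} ≤ #{u | j₀ + k ≤ l u} := by
      refine two_mul_card_le_of_forall_le_card_lower_adj hα hG l (fun u hu => ?_) fun w hw => ?_
      · simp only [mem_filter, mem_univ, true_and] at hu ⊢
        omega
      · simp only [mem_filter, mem_univ, true_and] at hw
        refine (hdown w (by omega)).trans (card_le_card fun u hu => ?_)
        simp only [mem_filter, mem_univ, true_and] at hu ⊢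
        exact ⟨by omega, hu.1, by omega⟩
    calc 2 ^ (k + 1) * #{u | j₀ + (k + 1) ≤ l u}
        = 2 ^ k * (2 * #{u | j₀ + (k + 1) ≤ l u}) := by ring
      _ ≤ 2 ^ k * #{u | j₀ + k ≤ l u} := Nat.mul_le_mul_left _ halve
      _ ≤ #{u | j₀ ≤ l u} := ih

theorem lt_add_clog_card_of_forall_le_card_adj_pred
    (hdown : ∀ w, j₀ < l w → 2 * α ≤ #{u | G.Adj w u ∧ l u = l w - 1}) (v : V) :
    l v < j₀ + (1 + Nat.clog 2 (Fintype.card V)) := by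
  set K := 1 + Nat.clog 2 (Fintype.card V)
  by_contra! hv
  have hcard : Fintype.card V < 2 ^ K :=
    (Nat.le_pow_clog one_lt_two _).trans_lt (Nat.pow_lt_pow_right one_lt_two (by omega))
  have hpos : 0 < #{u | j₀ + K ≤ l u} := card_pos.mpr ⟨v, by simpa using hv⟩
  have : 2 ^ K ≤ Fintype.card V :=
    calc 2 ^ K ≤ 2 ^ K * #{u | j₀ + K ≤ l u} := Nat.le_mul_of_pos_right _ hpos
      _ ≤ #{u | j₀ ≤ l u} := two_pow_mul_card_le_of_forall_le_card_adj_pred hα hG l hdown K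
      _ ≤ Fintype.card V := card_le_univ _
  omega

end SimpleGraph

open SimpleGraph in
theorem stmt19_general {V : Type*} [Fintype V] (G : SimpleGraph V) (α : ℕ) (hα : 1 ≤ α)
    (n L : ℕ) (hn : n = Fintype.card V) (hL : L = 1 + Nat.clog 2 n)
    (l g : V → ℕ) (hg : ∀ v, g v = (l v + L - 1) / L)
    (harb : ∀ U : Finset V, 2 ≤ U.card →
      (G.edgeFinset.filter fun e => ∀ x ∈ e, x ∈ U).card ≤ α * (U.card - 1))
    (hdown : ∀ v : V, 1 < l v →
      2 ^ (g v) ≤ (Finset.univ.filter fun u => G.Adj v u ∧ l u = l v - 1).card) :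
    ∀ v : V, g v ≤ Nat.clog 2 (4 * α) := by
  have hC : Nat.clog 2 4 ≤ Nat.clog 2 (4 * α) := Nat.clog_mono_right 2 (by omega)
  have hαC : 2 * α ≤ 2 ^ Nat.clog 2 (4 * α) := by
    have := Nat.le_pow_clog one_lt_two (4 * α)
    omega
  rw [show Nat.clog 2 4 = 2 by rw [show 4 = 2 ^ 2 by rfl, Nat.clog_pow _ _ one_lt_two]] at hC
  generalize Nat.clog 2 (4 * α) = C at hC hαC ⊢
  have hLpos : 0 < L := by omega
  have hLC : L * (C - 1) + L = L * C := by
    rw [← Nat.mul_succ, Nat.succ_eq_add_one, Nat.sub_add_cancel (by omega)]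
  have hdown' : ∀ w, L * (C - 1) < l w → 2 * α ≤ #{u | G.Adj w u ∧ l u = l w - 1} := by
    intro w hw
    have hgw : C ≤ g w := by
      rw [hg, Nat.le_div_iff_mul_le hLpos, mul_comm]
      omega
    have hL1 : L ≤ L * (C - 1) := Nat.le_mul_of_pos_right _ (by omega)
    exact (hαC.trans (Nat.pow_le_pow_right two_pos hgw)).trans (hdown w (by omega))
  intro v
  have hv :=
    lt_add_clog_card_of_forall_le_card_adj_pred (by omega) (card_edgesWithin_le harb) l hdown' v
  rw [← hn, ← hL, hLC] at hv
  rw [hg, Nat.div_le_iff_le_mul_add_pred hLpos]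
  omega

/-- In the levelled structure with `L = 1 + ⌈log₂ n⌉` levels per group (levels
`1, ..., L⌈log₂ n⌉`, the group of a vertex being `g v = ⌈l v / L⌉`), if every vertex has at most
`2·5·2^(g v)` out-neighbours (neighbours at its level or above) and, when `l v > 1`, at least
`2^(g v)` neighbours at the level directly below, and `G` has arboricity at most `α ≥ 1`, then
every vertex lies in a group `g v ≤ ⌈log₂ (4α)⌉`. -/
theorem stmt19 {V : Type*} [Fintype V] (G : SimpleGraph V) (α : ℕ) (hα : 1 ≤ α)
    (n L : ℕ) (hn : n = Fintype.card V) (hL : L = 1 + Nat.clog 2 n)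
    (l g : V → ℕ) (hg : ∀ v, g v = (l v + L - 1) / L)
    (hrange : ∀ v, 1 ≤ l v ∧ l v ≤ L * Nat.clog 2 n)
    (harb : ∀ U : Finset V, 2 ≤ U.card →
      (G.edgeFinset.filter fun e => ∀ x ∈ e, x ∈ U).card ≤ α * (U.card - 1))
    (hout : ∀ v : V,
      (Finset.univ.filter fun u => G.Adj v u ∧ l v ≤ l u).card ≤ 2 * 5 * 2 ^ (g v))
    (hdown : ∀ v : V, 1 < l v →
      2 ^ (g v) ≤ (Finset.univ.filter fun u => G.Adj v u ∧ l u = l v - 1).card) :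
    ∀ v : V, g v ≤ Nat.clog 2 (4 * α) :=
  stmt19_general G α hα n L hn hL l g hg harb hdown
end
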